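/- arXiv:math/9509226 — 2 statements merged into one kernel-verified Lean document; each statement's English description precedes it below -/
import Mathlib

section
/- If P is a partial order satisfying the Knaster condition and Q is a partial order satisfying the c.c.c., then the product P × Q satisfies the c.c.c. -/
/-- Two conditions are compatible if they have a common upper bound. -/
def Compat {P : Type} [PartialOrder P] (p q : P) : Prop := ∃ r, p ≤ r ∧ q ≤ r

/-- The Knaster condition. -/
def Knaster (P : Type) [PartialOrder P] : Prop :=
  ∀ p : (Cardinal.aleph.{0} 1).ord.ToType → P,
    ∃ A : Set (Cardinal.aleph.{0} 1).ord.ToType, ¬ A.Countable ∧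
      ∀ i ∈ A, ∀ j ∈ A, Compat (p i) (p j)

/-- The countable chain condition: every antichain is countable. -/
def CCC (P : Type) [PartialOrder P] : Prop :=
  ∀ A : Set P, (∀ p ∈ A, ∀ q ∈ A, p ≠ q → ¬ Compat p q) → A.Countable

/-!
Given an uncountable antichain `A` in `P × Q`, index ℵ₁ many of its elements by `ω₁` and apply the
Knaster condition to their first coordinates. On the resulting uncountable index set the first
coordinates are pairwise compatible, so the second coordinates must be pairwise incompatible: they
form an uncountable antichain in `Q`.
-/

theorem compat_prod_iff {P Q : Type} [PartialOrder P] [PartialOrder Q] {x y : P × Q} :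
    Compat x y ↔ Compat x.1 y.1 ∧ Compat x.2 y.2 := by
  constructor
  · rintro ⟨r, hxr, hyr⟩
    exact ⟨⟨r.1, hxr.1, hyr.1⟩, ⟨r.2, hxr.2, hyr.2⟩⟩
  · rintro ⟨⟨a, hxa, hya⟩, ⟨b, hxb, hyb⟩⟩
    exact ⟨(a, b), ⟨hxa, hxb⟩, ⟨hya, hyb⟩⟩

theorem compat_refl {P : Type} [PartialOrder P] (p : P) : Compat p p :=
  ⟨p, le_rfl, le_rfl⟩

theorem CCC.countable_of_pairwise_not_compat {Q ι : Type} [PartialOrder Q] (hQ : CCC Q)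
    (f : ι → Q) {S : Set ι} (hS : S.Pairwise fun i j => ¬ Compat (f i) (f j)) : S.Countable := by
  have hinj : S.InjOn f := fun i hi j hj hfij =>
    by_contra fun hij => hS hi hj hij (hfij ▸ compat_refl (f i))
  refine Set.countable_of_injective_of_countable_image hinj (hQ _ ?_)
  rintro _ ⟨i, hi, rfl⟩ _ ⟨j, hj, rfl⟩ hne
  exact hS hi hj (fun hij => hne (hij ▸ rfl))

theorem nonempty_embedding_omegaOne_of_not_countable {α : Type} {A : Set α}
    (hA : ¬ A.Countable) : Nonempty ((Cardinal.aleph.{0} 1).ord.ToType ↪ A) := by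
  rw [← Cardinal.le_def, Cardinal.mk_ord_toType, Cardinal.aleph_one_le_iff, ← not_le,
    Cardinal.le_aleph0_iff_set_countable]
  exact hA

/-- If `P` is Knaster and `Q` is c.c.c. then `P × Q` is c.c.c. -/
theorem stmt4 (P Q : Type) [PartialOrder P] [PartialOrder Q]
    (hP : Knaster P) (hQ : CCC Q) : CCC (P × Q) := by
  intro A hA
  by_contra hunc
  obtain ⟨f⟩ := nonempty_embedding_omegaOne_of_not_countable hunc
  obtain ⟨S, hS, hcompat⟩ := hP fun i => (f i : P × Q).1
  refine hS (hQ.countable_of_pairwise_not_compat (fun i => (f i : P × Q).2) ?_)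
  intro i hi j hj hij hc
  have hne : (f i : P × Q) ≠ f j := fun h => hij (f.injective (Subtype.ext h))
  exact hA _ (f i).2 _ (f j).2 hne (compat_prod_iff.2 ⟨hcompat i hi j hj, hc⟩)
end

section
/- Suppose B₁ is a Boolean algebra satisfying the c.c.c. and B₂ is a Boolean algebra with the property: for every family ⟨x_i : i < λ⟩ of nonzero elements of B₂ there is Z ⊆ λ with |Z| = ℵ₁ such that {x_i : i ∈ Z} generates a proper filter (no finite meet is 0). Then the product Boolean algebra B₁ × B₂ satisfies the λ-c.c. -/
/-!
An antichain in `B₁ × B₂` splits into the elements with second coordinate `⊥`, which project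
injectively onto an antichain of `B₁`, and the rest, which project injectively onto an antichain
of `B₂`. The first part is countable by the c.c.c. For the second, two distinct indices of a
subfamily generating a proper filter give disjoint elements with nonzero meet, so `B₂` has no
antichain of size `λ`. Since `λ` is infinite, a sum of two cardinals below `λ` stays below `λ`.
-/

open Cardinal

universe u

def ChainCondition (κ : Cardinal.{u}) (α : Type u) [PartialOrder α] [OrderBot α] : Prop :=
  ∀ A : Set α, (∀ a ∈ A, a ≠ ⊥) → A.PairwiseDisjoint id → #A < κ

theorem Set.PairwiseDisjoint.injOn_of_ne_bot {ι α : Type*} [SemilatticeInf α] [OrderBot α]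
    {s : Set ι} {f : ι → α} (hs : s.PairwiseDisjoint f) (hf : ∀ i ∈ s, f i ≠ ⊥) :
    s.InjOn f := fun i hi j hj hij =>
  hs.elim' hi hj (by rw [hij, inf_idem]; exact hf j hj)

theorem ChainCondition.mk_lt {κ : Cardinal.{u}} {ι α : Type u} [SemilatticeInf α] [OrderBot α]
    (h : ChainCondition κ α) {s : Set ι} {f : ι → α} (hs : s.PairwiseDisjoint f)
    (hf : ∀ i ∈ s, f i ≠ ⊥) : #s < κ := by
  have hinj := hs.injOn_of_ne_bot hf
  rw [← mk_image_eq_of_injOn _ _ hinj]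
  exact h _ (by rintro _ ⟨i, hi, rfl⟩; exact hf i hi) (hinj.pairwiseDisjoint_image.2 hs)

theorem ChainCondition.prod {κ : Cardinal.{u}} {α β : Type u} [Lattice α] [OrderBot α]
    [Lattice β] [OrderBot β] (hκ : ℵ₀ ≤ κ) (hα : ChainCondition κ α) (hβ : ChainCondition κ β) :
    ChainCondition κ (α × β) := by
  intro A hA hdisj
  set S : Set (α × β) := {p | p.2 = ⊥}
  have hfst : (A ∩ S).PairwiseDisjoint Prod.fst := fun p hp q hq hpq =>
    (Prod.disjoint_iff.1 (hdisj hp.1 hq.1 hpq)).1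
  have hsnd : (A \ S).PairwiseDisjoint Prod.snd := fun p hp q hq hpq =>
    (Prod.disjoint_iff.1 (hdisj hp.1 hq.1 hpq)).2
  have hfst_ne : ∀ p ∈ A ∩ S, p.1 ≠ ⊥ := fun p hp h1 => hA p hp.1 (Prod.ext h1 hp.2)
  calc #A = #(A ∩ S ∪ A \ S : Set _) := by rw [Set.inter_union_sdiff]
    _ ≤ #↥(A ∩ S) + #↥(A \ S) := mk_union_le _ _
    _ < κ := add_lt_of_lt hκ (hα.mk_lt hfst hfst_ne) (hβ.mk_lt hsnd fun _ hp => hp.2)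

theorem chainCondition_of_countable {α : Type u} [SemilatticeInf α] [OrderBot α]
    {κ : Cardinal.{u}} (hκ : ℵ₀ < κ)
    (h : ∀ A : Set α, (∀ x ∈ A, x ≠ ⊥) → (∀ x ∈ A, ∀ y ∈ A, x ≠ y → x ⊓ y = ⊥) → A.Countable) :
    ChainCondition κ α := fun A hA hdisj =>
  (mk_le_aleph0_iff.2 (h A hA fun _ hx _ hy hxy => (hdisj hx hy hxy).eq_bot).to_subtype).trans_lt hκ

theorem chainCondition_of_exists_proper_filter {α : Type u} [Lattice α] [BoundedOrder α]
    {κ : Cardinal.{u}}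
    (h : ∀ x : κ.ord.ToType → α, (∀ i, x i ≠ ⊥) →
      ∃ Z : Set κ.ord.ToType, 1 < #Z ∧ ∀ t : Finset κ.ord.ToType, ↑t ⊆ Z → t.inf x ≠ ⊥) :
    ChainCondition κ α := by
  intro A hA hdisj
  by_contra! hκA
  rw [← mk_ord_toType κ, le_def] at hκA
  obtain ⟨e⟩ := hκA
  obtain ⟨Z, hZ, hfilter⟩ := h (fun i => e i) fun i => hA _ (e i).2
  obtain ⟨⟨i, hi⟩, ⟨j, hj⟩, hij⟩ := one_lt_iff_nontrivial.1 hZ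
  have hij : (e i : α) ≠ e j := fun h => hij (Subtype.ext (e.injective (Subtype.ext h)))
  refine hfilter {i, j} (by simp [Set.insert_subset_iff, hi, hj]) ?_
  rw [Finset.inf_insert, Finset.inf_singleton]
  exact (hdisj (e i).2 (e j).2 hij).eq_bot

/-- If `B₁` is a c.c.c. Boolean algebra and `B₂` is a Boolean algebra in which
every `λ`-indexed family of nonzero elements has a subfamily of size `ℵ₁`
generating a proper filter, then the product `B₁ × B₂` satisfies the `λ`-c.c. -/
theorem stmt11 (lam : Cardinal) (hlam : Cardinal.aleph0 < lam)
    (B₁ B₂ : Type) [BooleanAlgebra B₁] [BooleanAlgebra B₂]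
    (h1 : ∀ A : Set B₁, (∀ x ∈ A, x ≠ ⊥) →
      (∀ x ∈ A, ∀ y ∈ A, x ≠ y → x ⊓ y = ⊥) → A.Countable)
    (h2 : ∀ x : lam.ord.ToType → B₂, (∀ i, x i ≠ ⊥) →
      ∃ Z : Set lam.ord.ToType, Cardinal.mk Z = Cardinal.aleph 1 ∧
        ∀ t : Finset lam.ord.ToType, ↑t ⊆ Z → t.inf x ≠ ⊥) :
    ∀ A : Set (B₁ × B₂), (∀ p ∈ A, p ≠ ⊥) →
      (∀ p ∈ A, ∀ q ∈ A, p ≠ q → p ⊓ q = ⊥) → Cardinal.mk A < lam := by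
  intro A hA hdisj
  have hB₂ : ChainCondition lam B₂ := chainCondition_of_exists_proper_filter fun x hx => by
    obtain ⟨Z, hZ, hfilter⟩ := h2 x hx
    exact ⟨Z, hZ ▸ one_lt_aleph0.trans_le (aleph0_le_aleph 1), hfilter⟩
  exact (chainCondition_of_countable hlam h1).prod hlam.le hB₂ A hA
    fun p hp q hq hpq => disjoint_iff.2 (hdisj p hp q hq hpq)
end
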